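/- arXiv:1402.4618 — 7 statements merged into one kernel-verified Lean document; each statement's English description precedes it below -/
import Mathlib

section
/- Let D be a generator matrix on a finite set X such that every entry of the matrix exponential exp(D) is strictly positive, and let u : X → ℝ. Then there exist Λ ∈ ℝ and a strictly positive vector v : X → (0,∞) such that (D + I_u) v = Λ v; moreover every complex eigenvalue λ of D + I_u satisfies Re(λ) ≤ Λ. -/
/-!
Adding a diagonal matrix to `D` keeps `exp` entrywise positive: after adding large multiples of
`1`, both `D` and `D + I_u` become nonnegative with comparable entries, and the shifts only rescale
the exponentials. So `P = exp (D + I_u)` is a positive matrix. Maximising `s` over the pairs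
`(s, z)` with `z` in the simplex and `s z ≤ P z` (Collatz–Wielandt) yields an eigenvector `v > 0` of
`P` whose real eigenspace is a line. Since `D + I_u` commutes with `P`, it maps that line to itself,
so `(D + I_u) v = Λ v` and `P v = e^Λ v`. A complex eigenpair `(λ, w)` of `D + I_u` gives
`P w = e^λ w`, hence `e^{Re λ} |w| ≤ P |w|` by the triangle inequality, and the Collatz–Wielandt
bound against `v` gives `e^{Re λ} ≤ e^Λ`.
-/

open Finset Matrix NormedSpace
open scoped Nat

section

variable {n : Type*} [Fintype n] {v : n → ℝ}

theorem exists_le_smul_and_eq [Nonempty n] (hv : ∀ i, 0 < v i) (w : n → ℝ) :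
    ∃ t i₀, w ≤ t • v ∧ w i₀ = t * v i₀ := by
  obtain ⟨i₀, hi₀⟩ := Finite.exists_max fun i => w i / v i
  refine ⟨w i₀ / v i₀, i₀, fun i => ?_, (div_mul_cancel₀ _ (hv i₀).ne').symm⟩
  simpa only [Pi.smul_apply, smul_eq_mul, ← div_le_iff₀ (hv i)] using hi₀ i

theorem exists_smul_le_and_eq [Nonempty n] (hv : ∀ i, 0 < v i) (w : n → ℝ) :
    ∃ t i₀, t • v ≤ w ∧ w i₀ = t * v i₀ := by
  obtain ⟨t, i₀, hle, heq⟩ := exists_le_smul_and_eq hv (-w)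
  exact ⟨-t, i₀, fun i => by simpa [neg_le] using hle i, by simpa [neg_eq_iff_eq_neg] using heq⟩

theorem inv_sum_smul_mem_stdSimplex {w : n → ℝ} (hw : 0 ≤ w) (hsum : 0 < ∑ i, w i) :
    (∑ i, w i)⁻¹ • w ∈ stdSimplex ℝ n :=
  ⟨fun i => mul_nonneg (inv_nonneg.2 hsum.le) (hw i), by
    simp only [Pi.smul_apply, smul_eq_mul, ← mul_sum, inv_mul_cancel₀ hsum.ne']⟩

namespace Matrix

section Perron

variable {P : Matrix n n ℝ} {r : ℝ}

theorem mulVec_mono (hP : ∀ i j, 0 ≤ P i j) : Monotone (P *ᵥ ·) :=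
  fun _ _ h i => sum_le_sum fun j _ => mul_le_mul_of_nonneg_left (h j) (hP i j)

theorem mulVec_apply_pos (hP : ∀ i j, 0 < P i j) {z : n → ℝ} (hz : 0 ≤ z) (hz0 : z ≠ 0)
    (i : n) : 0 < (P *ᵥ z) i := by
  obtain ⟨j, hj⟩ := Function.ne_iff.1 hz0
  exact sum_pos' (fun k _ => mul_nonneg (hP i k).le (hz k))
    ⟨j, mem_univ j, mul_pos (hP i j) ((hz j).lt_of_ne' hj)⟩

theorem fst_le_of_smul_le_mulVec (hP : ∀ i j, 0 ≤ P i j) {s : ℝ} {z : n → ℝ}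
    (hz : z ∈ stdSimplex ℝ n) (hsz : s • z ≤ P *ᵥ z) : s ≤ ∑ i, ∑ j, P i j := by
  calc s = ∑ i, s * z i := by rw [← mul_sum, hz.2, mul_one]
    _ ≤ ∑ i, ∑ j, P i j * z j := sum_le_sum fun i _ => hsz i
    _ ≤ ∑ i, ∑ j, P i j := sum_le_sum fun i _ => sum_le_sum fun j _ =>
        mul_le_of_le_one_right (hP i j) (mem_Icc_of_mem_stdSimplex hz j).2

theorem smul_le_mulVec_smul {s c : ℝ} {z : n → ℝ} (hc : 0 ≤ c) (hsz : s • z ≤ P *ᵥ z) :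
    s • c • z ≤ P *ᵥ (c • z) := by
  rw [smul_comm, mulVec_smul]
  exact smul_le_smul_of_nonneg_left hsz hc

/-- The largest `s` occurring here is the Perron root of `P` (Collatz–Wielandt formula). -/
def collatzWielandtSet (P : Matrix n n ℝ) : Set (ℝ × (n → ℝ)) :=
  {p | 0 ≤ p.1 ∧ p.2 ∈ stdSimplex ℝ n ∧ p.1 • p.2 ≤ P *ᵥ p.2}

theorem isCompact_collatzWielandtSet (hP : ∀ i j, 0 ≤ P i j) :
    IsCompact (collatzWielandtSet P) := by
  have hclosed : IsClosed (collatzWielandtSet P) :=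
    (isClosed_le continuous_const continuous_fst).inter
      (((isClosed_stdSimplex ℝ n).preimage continuous_snd).inter
        (isClosed_le (continuous_fst.smul continuous_snd)
          (continuous_const.matrix_mulVec continuous_snd)))
  refine ((isCompact_Icc (a := 0) (b := ∑ i, ∑ j, P i j)).prod
    (isCompact_stdSimplex ℝ n)).of_isClosed_subset hclosed fun p hp => ?_
  exact ⟨⟨hp.1, fst_le_of_smul_le_mulVec hP hp.2.1 hp.2.2⟩, hp.2.1⟩

theorem collatzWielandtSet_nonempty [Nonempty n] (hP : ∀ i j, 0 ≤ P i j) :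
    (collatzWielandtSet P).Nonempty := by
  classical
  inhabit n
  refine ⟨(0, Pi.single default 1), le_rfl, single_mem_stdSimplex ℝ default, ?_⟩
  rw [zero_smul, ← mulVec_zero P]
  exact mulVec_mono hP (Pi.single_nonneg.2 zero_le_one)

/-- If `P v ≠ r v` at a maximiser, then `w = P v` satisfies `P w - r w = P (P v - r v) > 0`,
so `(r + ε) w ≤ P w` for some `ε > 0`, contradicting maximality. -/
theorem mulVec_eq_smul_of_isMaxOn (hP : ∀ i j, 0 < P i j) (hp : (r, v) ∈ collatzWielandtSet P)
    (hmax : IsMaxOn Prod.fst (collatzWielandtSet P) (r, v)) : P *ᵥ v = r • v := by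
  obtain ⟨hr, hv, hrv⟩ := hp
  have hv0 : v ≠ 0 := fun h => by simpa [h] using hv.2
  have : Nonempty n := ⟨(Function.ne_iff.1 hv0).choose⟩
  by_contra hne
  have hw : ∀ i, 0 < (P *ᵥ v) i := mulVec_apply_pos hP hv.1 hv0
  have hz : ∀ i, 0 < (P *ᵥ (P *ᵥ v - r • v)) i :=
    mulVec_apply_pos hP (sub_nonneg.2 hrv) (sub_ne_zero.2 hne)
  obtain ⟨ε, i₀, hε, hi₀⟩ := exists_smul_le_and_eq hw (P *ᵥ (P *ᵥ v - r • v))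
  have hεpos : 0 < ε := pos_of_mul_pos_left (hi₀ ▸ hz i₀ : 0 < ε * _) (hw i₀).le
  have hstep : (r + ε) • (P *ᵥ v) ≤ P *ᵥ (P *ᵥ v) := by
    rw [mulVec_sub, mulVec_smul] at hε
    rw [add_smul]
    intro i
    have := hε i
    simp only [Pi.add_apply, Pi.smul_apply, Pi.sub_apply, smul_eq_mul] at this ⊢
    linarith
  have hsum : 0 < ∑ i, (P *ᵥ v) i := sum_pos (fun i _ => hw i) univ_nonempty
  have hmem : (r + ε, (∑ i, (P *ᵥ v) i)⁻¹ • (P *ᵥ v)) ∈ collatzWielandtSet P :=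
    ⟨by linarith, inv_sum_smul_mem_stdSimplex (fun i => (hw i).le) hsum,
      smul_le_mulVec_smul (inv_nonneg.2 hsum.le) hstep⟩
  have hle : r + ε ≤ r := hmax hmem
  linarith

theorem exists_pos_eigenvector_of_pos [Nonempty n] (hP : ∀ i j, 0 < P i j) :
    ∃ (r : ℝ) (v : n → ℝ), (∀ i, 0 < v i) ∧ P *ᵥ v = r • v := by
  obtain ⟨⟨r, v⟩, hp, hmax⟩ := (isCompact_collatzWielandtSet fun i j => (hP i j).le).exists_isMaxOn
    (collatzWielandtSet_nonempty fun i j => (hP i j).le) continuous_fst.continuousOn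
  have hPv := mulVec_eq_smul_of_isMaxOn hP hp hmax
  have hv0 : v ≠ 0 := fun h => by simpa [h] using hp.2.1.2
  refine ⟨r, v, fun i => ?_, hPv⟩
  have := mulVec_apply_pos hP hp.2.1.1 hv0 i
  rw [hPv, Pi.smul_apply, smul_eq_mul] at this
  exact pos_of_mul_pos_right this hp.1

/-- Collatz–Wielandt bound: compare `z` with the largest multiple `t • v` lying above it, at an
index where the two touch. -/
theorem le_of_smul_le_mulVec (hP : ∀ i j, 0 ≤ P i j) (hv : ∀ i, 0 < v i) (hPv : P *ᵥ v = r • v)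
    {s : ℝ} {z : n → ℝ} (hz : 0 ≤ z) (hz0 : z ≠ 0) (hsz : s • z ≤ P *ᵥ z) : s ≤ r := by
  obtain ⟨j, hj⟩ := Function.ne_iff.1 hz0
  have : Nonempty n := ⟨j⟩
  obtain ⟨t, i₀, hzt, hi₀⟩ := exists_le_smul_and_eq hv z
  have ht : 0 < t := pos_of_mul_pos_left (((hz j).lt_of_ne' hj).trans_le (hzt j)) (hv j).le
  have hzi₀ : 0 < z i₀ := hi₀ ▸ mul_pos ht (hv i₀)
  refine le_of_mul_le_mul_right ?_ hzi₀
  calc s * z i₀ ≤ (P *ᵥ z) i₀ := hsz i₀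
    _ ≤ (P *ᵥ (t • v)) i₀ := mulVec_mono hP hzt i₀
    _ = r * z i₀ := by
      rw [mulVec_smul, hPv, hi₀]
      simp only [Pi.smul_apply, smul_eq_mul]
      ring

/-- Subtract the largest multiple of `v` lying below `w`: the difference is a nonnegative
`r`-eigenvector vanishing somewhere, which positivity of `P` forces to be `0`. -/
theorem exists_eq_smul_of_mulVec_eq_smul [Nonempty n] (hP : ∀ i j, 0 < P i j)
    (hv : ∀ i, 0 < v i) (hPv : P *ᵥ v = r • v) {w : n → ℝ} (hPw : P *ᵥ w = r • w) :
    ∃ t : ℝ, w = t • v := by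
  obtain ⟨t, i₀, htw, hi₀⟩ := exists_smul_le_and_eq hv w
  refine ⟨t, (sub_eq_zero.1 (by_contra fun hne => ?_))⟩
  have hPz : P *ᵥ (w - t • v) = r • (w - t • v) := by
    rw [mulVec_sub, mulVec_smul, hPw, hPv, smul_sub, smul_comm]
  have := mulVec_apply_pos hP (sub_nonneg.2 htw) hne i₀
  simp [hPz, hi₀] at this

theorem exists_mulVec_eq_smul_of_commute [Nonempty n] (hP : ∀ i j, 0 < P i j)
    (hv : ∀ i, 0 < v i) (hPv : P *ᵥ v = r • v) {A : Matrix n n ℝ} (hA : Commute A P) :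
    ∃ μ : ℝ, A *ᵥ v = μ • v :=
  exists_eq_smul_of_mulVec_eq_smul hP hv hPv
    (by rw [mulVec_mulVec, ← hA.eq, ← mulVec_mulVec, hPv, mulVec_smul])

theorem norm_le_of_mulVec_eq_smul (hP : ∀ i j, 0 ≤ P i j) (hv : ∀ i, 0 < v i)
    (hPv : P *ᵥ v = r • v) {μ : ℂ} {w : n → ℂ} (hw : w ≠ 0)
    (h : P.map Complex.ofReal *ᵥ w = μ • w) : ‖μ‖ ≤ r := by
  refine le_of_smul_le_mulVec hP hv hPv (z := fun i => ‖w i‖) (fun i => norm_nonneg _)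
    (fun hz => hw (funext fun i => norm_eq_zero.1 (congrFun hz i))) fun i => ?_
  calc ‖μ‖ * ‖w i‖ = ‖∑ j, (P i j : ℂ) * w j‖ := by
        rw [← norm_mul, ← smul_eq_mul, ← Pi.smul_apply, ← h]; rfl
    _ ≤ ∑ j, P i j * ‖w j‖ := by
        refine (norm_sum_le _ _).trans_eq (sum_congr rfl fun j _ => ?_)
        rw [norm_mul, Complex.norm_real, Real.norm_of_nonneg (hP i j)]

end Perron

section Exp

variable [DecidableEq n]

theorem pow_apply_le_pow_apply {α : Type*} [Semiring α] [PartialOrder α] [IsOrderedRing α]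
    {M N : Matrix n n α} (hM : ∀ i j, 0 ≤ M i j) (hMN : ∀ i j, M i j ≤ N i j) (k : ℕ) :
    ∀ i j, (M ^ k) i j ≤ (N ^ k) i j := by
  induction k with
  | zero => exact fun _ _ => le_rfl
  | succ k ih =>
    intro i j
    rw [pow_succ, pow_succ, mul_apply, mul_apply]
    exact sum_le_sum fun l _ =>
      mul_le_mul (ih i l) (hMN l j) (hM l j) ((pow_apply_nonneg hM k i l).trans (ih i l))

open scoped Norms.Operator

theorem hasSum_exp_apply (A : Matrix n n ℝ) (i j : n) :
    HasSum (fun k : ℕ => (k ! : ℝ)⁻¹ * (A ^ k) i j) (exp A i j) :=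
  Pi.hasSum.1 (Pi.hasSum.1 (exp_series_hasSum_exp' (𝕂 := ℝ) A) i) j

theorem exp_mulVec_of_mulVec_eq_smul {𝕂 : Type*} [RCLike 𝕂] {A : Matrix n n 𝕂} {v : n → 𝕂}
    {μ : 𝕂} (h : A *ᵥ v = μ • v) : exp A *ᵥ v = exp μ • v := by
  have hpow (k : ℕ) : (A ^ k) *ᵥ v = μ ^ k • v := by
    induction k with
    | zero => simp
    | succ k ih => rw [pow_succ', ← mulVec_mulVec, ih, mulVec_smul, h, smul_smul, pow_succ]
  have hA := (exp_series_hasSum_exp' (𝕂 := 𝕂) A).map (mulVec.addMonoidHomLeft v)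
    (continuous_id.matrix_mulVec continuous_const)
  refine hA.unique ?_
  simpa [Function.comp_def, mulVec.addMonoidHomLeft, smul_mulVec, hpow, smul_smul]
    using (exp_series_hasSum_exp' (𝕂 := 𝕂) μ).smul_const v

theorem exp_add_smul_one (A : Matrix n n ℝ) (c : ℝ) :
    exp (A + c • 1) = Real.exp c • exp A := by
  have hc : exp (c • 1 : Matrix n n ℝ) = Real.exp c • 1 := by
    rw [← Algebra.algebraMap_eq_smul_one, ← Algebra.algebraMap_eq_smul_one, Real.exp_eq_exp_ℝ]
    exact (algebraMap_exp_comm c).symm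
  rw [exp_add_of_commute _ _ ((Commute.one_right A).smul_right c), hc, mul_smul_comm, mul_one]

theorem exp_map_ofReal (A : Matrix n n ℝ) :
    exp (A.map Complex.ofReal) = (exp A).map Complex.ofReal :=
  (map_exp Complex.ofRealHom.mapMatrix (continuous_id.matrix_map Complex.continuous_ofReal) A).symm

theorem exp_apply_le_exp_apply {M N : Matrix n n ℝ} (hM : ∀ i j, 0 ≤ M i j)
    (hMN : ∀ i j, M i j ≤ N i j) (i j : n) : exp M i j ≤ exp N i j :=
  hasSum_le
    (fun k => mul_le_mul_of_nonneg_left (pow_apply_le_pow_apply hM hMN k i j) (by positivity))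
    (hasSum_exp_apply M i j) (hasSum_exp_apply N i j)

theorem exp_add_diagonal_apply_pos {D : Matrix n n ℝ} (hoff : ∀ i j, i ≠ j → 0 ≤ D i j)
    (hD : ∀ i j, 0 < exp D i j) (d : n → ℝ) (i j : n) : 0 < exp (D + diagonal d) i j := by
  obtain ⟨a, ha⟩ := Finite.exists_le fun k => -D k k
  obtain ⟨b, hb⟩ := Finite.exists_le fun k => a - d k
  have hM : ∀ i j, 0 ≤ (D + a • 1) i j := by
    intro i j
    rcases eq_or_ne i j with rfl | hij
    · simp only [add_apply, smul_apply, one_apply_eq, smul_eq_mul, mul_one]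
      linarith [ha i]
    · simpa [one_apply_ne hij] using hoff i j hij
  have hMN : ∀ i j, (D + a • 1) i j ≤ (D + diagonal d + b • 1) i j := by
    intro i j
    rcases eq_or_ne i j with rfl | hij
    · simp only [add_apply, smul_apply, one_apply_eq, diagonal_apply_eq, smul_eq_mul, mul_one]
      linarith [hb i]
    · simp [one_apply_ne hij, diagonal_apply_ne _ hij]
  have hle := exp_apply_le_exp_apply hM hMN i j
  rw [exp_add_smul_one, exp_add_smul_one, smul_apply, smul_apply, smul_eq_mul, smul_eq_mul] at hle
  exact pos_of_mul_pos_right ((mul_pos (Real.exp_pos a) (hD i j)).trans_le hle) (Real.exp_pos b).le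

end Exp

end Matrix

end

theorem stmt_1_general {X : Type*} [Fintype X] [DecidableEq X]
    (D : Matrix X X ℝ)
    (hoff : ∀ i j, i ≠ j → 0 ≤ D i j)
    (hirr : ∀ i j, 0 < NormedSpace.exp D i j)
    (u : X → ℝ) :
    ∃ (Λ : ℝ) (v : X → ℝ), (∀ i, 0 < v i) ∧
      (D + Matrix.diagonal u).mulVec v = Λ • v ∧
      ∀ (lam : ℂ) (w : X → ℂ), w ≠ 0 →
        ((D + Matrix.diagonal u).map (Complex.ofReal)).mulVec w = lam • w →
        lam.re ≤ Λ := by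
  rcases isEmpty_or_nonempty X with hX | hX
  · exact ⟨0, 0, isEmptyElim, Subsingleton.elim _ _,
      fun _ w hw _ => (hw (Subsingleton.elim _ _)).elim⟩
  set A := D + diagonal u
  have hP : ∀ i j, 0 < exp A i j := exp_add_diagonal_apply_pos hoff hirr u
  obtain ⟨r, v, hv, hPv⟩ := exists_pos_eigenvector_of_pos hP
  obtain ⟨Λ, hΛ⟩ := exists_mulVec_eq_smul_of_commute hP hv hPv (Commute.refl A).exp_right
  refine ⟨Λ, v, hv, hΛ, fun μ w hw hμ => ?_⟩
  have hexp := exp_mulVec_of_mulVec_eq_smul hμ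
  rw [exp_map_ofReal, ← Complex.exp_eq_exp_ℂ] at hexp
  have hnorm := norm_le_of_mulVec_eq_smul (fun i j => (hP i j).le) hv
    (by rw [exp_mulVec_of_mulVec_eq_smul hΛ, ← Real.exp_eq_exp_ℝ]) hw hexp
  rwa [Complex.norm_exp, Real.exp_le_exp] at hnorm

/-- Perron–Frobenius for `D + I_u` where `D` is an irreducible generator matrix:
there is a real eigenvalue `Λ` with strictly positive eigenvector, dominating the
real part of every complex eigenvalue. -/
theorem stmt_1 {X : Type*} [Fintype X] [DecidableEq X]
    (D : Matrix X X ℝ)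
    (hoff : ∀ i j, i ≠ j → 0 ≤ D i j) (hrow : ∀ i, ∑ j, D i j = 0)
    (hirr : ∀ i j, 0 < NormedSpace.exp D i j)
    (u : X → ℝ) :
    ∃ (Λ : ℝ) (v : X → ℝ), (∀ i, 0 < v i) ∧
      (D + Matrix.diagonal u).mulVec v = Λ • v ∧
      ∀ (lam : ℂ) (w : X → ℂ), w ≠ 0 →
        ((D + Matrix.diagonal u).map (Complex.ofReal)).mulVec w = lam • w →
        lam.re ≤ Λ :=
  stmt_1_general D hoff hirr u
end

section
/- Let D be a generator matrix on a finite set X, u : X → ℝ, Λ ∈ ℝ, and v : X → (0,∞) a strictly positive vector satisfying the eigenvector equation (D + I_u) v = Λ v. Define the matrix Ď by Ď(i,j) = (v(j)/v(i)) · [ D(i,j) + (u(i) − Λ)·𝟙{i = j} ]. Then Ď is a generator matrix: Ď(i,j) ≥ 0 for all i ≠ j and Σ_j Ď(i,j) = 0 for every i. -/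
open Matrix

theorem Matrix.sum_div_mul_add_diagonal_apply {X K : Type*} [Fintype X] [DecidableEq X] [Field K]
    (A : Matrix X X K) (w v : X → K) (i : X) (hvi : v i ≠ 0) :
    ∑ j, v j / v i * (A i j + w i * if i = j then 1 else 0) = ((A *ᵥ v) i + w i * v i) / v i := by
  simp only [mul_add, Finset.sum_add_distrib, mul_ite, mul_one, mul_zero, Finset.sum_ite_eq,
    Finset.mem_univ, if_true, mulVec, dotProduct, add_div, Finset.sum_div]
  congr 1
  · exact Finset.sum_congr rfl fun j _ => by ring
  · field_simp

theorem Matrix.mulVec_add_diagonal_apply_eq {X K : Type*} [Fintype X] [DecidableEq X] [Field K]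
    {A : Matrix X X K} {u v : X → K} {Λ : K} (heig : (A + diagonal u) *ᵥ v = Λ • v) (i : X) :
    (A *ᵥ v) i + (u i - Λ) * v i = 0 := by
  have h := congrFun heig i
  simp only [add_mulVec, mulVec_diagonal, Pi.add_apply, Pi.smul_apply, smul_eq_mul] at h
  linear_combination h

theorem stmt_2_general {X : Type*} [Fintype X] [DecidableEq X]
    (D : Matrix X X ℝ)
    (hoff : ∀ i j, i ≠ j → 0 ≤ D i j)
    (u : X → ℝ) (Λ : ℝ) (v : X → ℝ) (hv : ∀ i, 0 < v i)
    (heig : (D + Matrix.diagonal u).mulVec v = Λ • v)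
    (Dcheck : Matrix X X ℝ)
    (hDcheck : ∀ i j, Dcheck i j = (v j / v i) * (D i j + (u i - Λ) * (if i = j then 1 else 0))) :
    (∀ i j, i ≠ j → 0 ≤ Dcheck i j) ∧ (∀ i, ∑ j, Dcheck i j = 0) := by
  refine ⟨fun i j hij => ?_, fun i => ?_⟩
  · rw [hDcheck, if_neg hij, mul_zero, add_zero]
    exact mul_nonneg (div_nonneg (hv j).le (hv i).le) (hoff i j hij)
  · simp only [hDcheck, sum_div_mul_add_diagonal_apply D (fun i => u i - Λ) v i (hv i).ne',
      mulVec_add_diagonal_apply_eq heig, zero_div]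

/-- The twisted matrix `Ď(i,j) = (v(j)/v(i))·[D(i,j) + (u(i) − Λ)·𝟙{i=j}]` built from a
positive eigenvector `(D + I_u)v = Λv` is again a generator matrix. -/
theorem stmt_2 {X : Type*} [Fintype X] [DecidableEq X]
    (D : Matrix X X ℝ)
    (hoff : ∀ i j, i ≠ j → 0 ≤ D i j) (hrow : ∀ i, ∑ j, D i j = 0)
    (u : X → ℝ) (Λ : ℝ) (v : X → ℝ) (hv : ∀ i, 0 < v i)
    (heig : (D + Matrix.diagonal u).mulVec v = Λ • v)
    (Dcheck : Matrix X X ℝ)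
    (hDcheck : ∀ i j, Dcheck i j = (v j / v i) * (D i j + (u i - Λ) * (if i = j then 1 else 0))) :
    (∀ i j, i ≠ j → 0 ≤ Dcheck i j) ∧ (∀ i, ∑ j, Dcheck i j = 0) :=
  stmt_2_general D hoff u Λ v hv heig Dcheck hDcheck
end

section
/- Let D be a generator matrix on a finite set X satisfying detailed balance with respect to a strictly positive probability vector π, let u : X → ℝ, ζ ∈ ℝ, Λ_ζ ∈ ℝ, and v_ζ : X → (0,∞) satisfy (D + ζ I_u) v_ζ = Λ_ζ v_ζ. Define D_ζ(i,j) = (v_ζ(j)/v_ζ(i)) · [ D(i,j) + (ζ u(i) − Λ_ζ)·𝟙{i = j} ] and π_ζ(i) = π(i) v_ζ(i)² / Z with Z = Σ_j π(j) v_ζ(j)². Then π_ζ is a probability vector and D_ζ satisfies detailed balance with respect to π_ζ: π_ζ(i) D_ζ(i,j) = π_ζ(j) D_ζ(j,i) for all i, j; in particular π_ζ is invariant for D_ζ. -/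
/-!
`D_ζ` is the Doob `h`-transform `v_ζ(i)⁻¹ A(i,j) v_ζ(j)` of `A = D + ζ I_u - Λ_ζ I`. Adding a
diagonal matrix does not affect detailed balance, and conjugating by `v_ζ` turns detailed
balance with respect to `π` into detailed balance with respect to `π v_ζ²`, because
`π(i) v(i)² · v(j)/v(i) · A(i,j) = v(i) v(j) · π(i) A(i,j)` is symmetric in `i, j`.
The eigenvector equation `A v_ζ = 0` says exactly that the rows of `D_ζ` sum to zero, and
reversibility together with zero row sums gives invariance.
-/

open Matrix Finset

namespace Matrix

variable {X : Type*}

def IsReversible (μ : X → ℝ) (A : Matrix X X ℝ) : Prop :=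
  ∀ i j, μ i * A i j = μ j * A j i

noncomputable def doobTransform (A : Matrix X X ℝ) (v : X → ℝ) : Matrix X X ℝ :=
  of fun i j => v j / v i * A i j

theorem sum_doobTransform_apply [Fintype X] (A : Matrix X X ℝ) (v : X → ℝ) (i : X) :
    ∑ j, doobTransform A v i j = (A *ᵥ v) i / v i := by
  simp only [doobTransform, of_apply, mulVec, dotProduct, sum_div]
  exact sum_congr rfl fun j _ => by ring

theorem sum_doobTransform_apply_eq_zero [Fintype X] {A : Matrix X X ℝ} {v : X → ℝ}
    (hv : A *ᵥ v = 0) (i : X) : ∑ j, doobTransform A v i j = 0 := by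
  rw [sum_doobTransform_apply, hv, Pi.zero_apply, zero_div]

namespace IsReversible

variable {μ : X → ℝ} {A : Matrix X X ℝ}

theorem add_diagonal [DecidableEq X] (h : IsReversible μ A) (d : X → ℝ) :
    IsReversible μ (A + diagonal d) := by
  intro i j
  rcases eq_or_ne i j with rfl | hij
  · rfl
  · simp only [add_apply, diagonal_apply_ne _ hij, diagonal_apply_ne _ hij.symm, add_zero, h i j]

theorem div_const (h : IsReversible μ A) (c : ℝ) : IsReversible (fun i => μ i / c) A := by
  intro i j
  simp only [div_mul_eq_mul_div, h i j]

theorem doobTransform (h : IsReversible μ A) {v : X → ℝ} (hv : ∀ i, v i ≠ 0) :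
    IsReversible (fun i => μ i * v i ^ 2) (doobTransform A v) := by
  have key : ∀ i j,
      μ i * v i ^ 2 * Matrix.doobTransform A v i j = v i * v j * (μ i * A i j) := by
    intro i j
    simp only [Matrix.doobTransform, of_apply]
    field_simp [hv i]
  intro i j
  rw [key, key, h i j, mul_comm (v i)]

theorem sum_mul_apply_eq_zero [Fintype X] (h : IsReversible μ A) (hrow : ∀ i, ∑ j, A i j = 0)
    (j : X) :
    ∑ i, μ i * A i j = 0 := by
  simp only [h _ j, ← mul_sum, hrow, mul_zero]

end IsReversible

end Matrix

theorem stmt_3_general {X : Type*} [Fintype X] [DecidableEq X]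
    (D : Matrix X X ℝ)
    (π : X → ℝ) (hπpos : ∀ i, 0 < π i) (hπsum : ∑ i, π i = 1)
    (hrev : ∀ i j, π i * D i j = π j * D j i)
    (u : X → ℝ) (ζ : ℝ) (Λζ : ℝ) (vζ : X → ℝ) (hvζ : ∀ i, 0 < vζ i)
    (heig : (D + ζ • Matrix.diagonal u).mulVec vζ = Λζ • vζ)
    (Dζ : Matrix X X ℝ)
    (hDζ : ∀ i j, Dζ i j = (vζ j / vζ i) * (D i j + (ζ * u i - Λζ) * (if i = j then 1 else 0)))
    (Z : ℝ) (hZ : Z = ∑ j, π j * (vζ j) ^ 2)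
    (πζ : X → ℝ) (hπζ : ∀ i, πζ i = π i * (vζ i) ^ 2 / Z) :
    (∀ i, 0 < πζ i) ∧ (∑ i, πζ i = 1) ∧
    (∀ i j, πζ i * Dζ i j = πζ j * Dζ j i) ∧
    (∀ j, ∑ i, πζ i * Dζ i j = 0) := by
  set A := D + diagonal fun i => ζ * u i - Λζ
  obtain rfl : Dζ = doobTransform A vζ := by
    ext i j
    simp [hDζ, A, doobTransform, diagonal_apply]
  obtain rfl : πζ = fun i => π i * vζ i ^ 2 / Z := funext hπζ
  have hAv : A *ᵥ vζ = 0 := by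
    have hA : A = D + ζ • diagonal u - Λζ • 1 := by
      ext i j
      rcases eq_or_ne i j with rfl | hij
      · simp only [A, Matrix.add_apply, Matrix.sub_apply, Matrix.smul_apply, diagonal_apply_eq,
          one_apply_eq, smul_eq_mul, mul_one]
        ring
      · simp [A, hij]
    rw [hA, sub_mulVec, smul_mulVec, one_mulVec, heig, sub_self]
  have hrevζ : IsReversible _ (doobTransform A vζ) :=
    ((IsReversible.add_diagonal hrev _).doobTransform fun i => (hvζ i).ne').div_const Z
  have : Nonempty X := by
    by_contra h
    simp [not_nonempty_iff.mp h] at hπsum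
  have hweight : ∀ i, 0 < π i * vζ i ^ 2 := fun i => mul_pos (hπpos i) (pow_pos (hvζ i) 2)
  have hZpos : 0 < Z := hZ ▸ sum_pos (fun j _ => hweight j) univ_nonempty
  refine ⟨fun i => div_pos (hweight i) hZpos, ?_, hrevζ,
    hrevζ.sum_mul_apply_eq_zero (sum_doobTransform_apply_eq_zero hAv)⟩
  rw [← sum_div, ← hZ, div_self hZpos.ne']

/-- If the generator `D` is reversible w.r.t. a positive probability vector `π`, then each
twisted generator `D_ζ` is reversible w.r.t. `π_ζ(i) = π(i)v_ζ(i)²/Z`; in particular `π_ζ`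
is an invariant probability vector for `D_ζ`. -/
theorem stmt_3 {X : Type*} [Fintype X] [DecidableEq X]
    (D : Matrix X X ℝ)
    (hoff : ∀ i j, i ≠ j → 0 ≤ D i j) (hrow : ∀ i, ∑ j, D i j = 0)
    (π : X → ℝ) (hπpos : ∀ i, 0 < π i) (hπsum : ∑ i, π i = 1)
    (hrev : ∀ i j, π i * D i j = π j * D j i)
    (u : X → ℝ) (ζ : ℝ) (Λζ : ℝ) (vζ : X → ℝ) (hvζ : ∀ i, 0 < vζ i)
    (heig : (D + ζ • Matrix.diagonal u).mulVec vζ = Λζ • vζ)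
    (Dζ : Matrix X X ℝ)
    (hDζ : ∀ i j, Dζ i j = (vζ j / vζ i) * (D i j + (ζ * u i - Λζ) * (if i = j then 1 else 0)))
    (Z : ℝ) (hZ : Z = ∑ j, π j * (vζ j) ^ 2)
    (πζ : X → ℝ) (hπζ : ∀ i, πζ i = π i * (vζ i) ^ 2 / Z) :
    (∀ i, 0 < πζ i) ∧ (∑ i, πζ i = 1) ∧
    (∀ i j, πζ i * Dζ i j = πζ j * Dζ j i) ∧
    (∀ j, ∑ i, πζ i * Dζ i j = 0) :=
  stmt_3_general D π hπpos hπsum hrev u ζ Λζ vζ hvζ heig Dζ hDζ Z hZ πζ hπζ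
end

section
/- Let D be a generator matrix on a finite set X such that every entry of exp(D) is strictly positive. Then, regarding D as a complex matrix, the kernel of D is one-dimensional and spanned by the all-ones vector, and every nonzero complex eigenvalue λ of D satisfies Re(λ) < 0. -/
/-!
Since the rows of `D` sum to zero, `P = exp D` is a stochastic matrix with positive entries, and
an eigenvector `w` of `D` for `λ` is an eigenvector of `P` for `e^λ`. If `Re λ ≥ 0` then
`‖e^λ‖ ≥ 1`, so at a coordinate `i` where `‖w i‖` is maximal the convex combination
`∑ j, P i j • w j` has norm at least `‖w i‖`; by strict convexity of the norm all `w j` are equal.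
Constant vectors are killed by `D`, which forces `λ = 0`.
-/

open scoped Matrix
open NormedSpace

section

variable {X : Type*} [Fintype X]

theorem exists_eq_const_of_norm_le_norm_sum_smul {E : Type*} [NormedAddCommGroup E]
    [NormedSpace ℝ E] [StrictConvexSpace ℝ E] {P : Matrix X X ℝ} (hpos : ∀ i j, 0 < P i j)
    (hrow : ∀ i, ∑ j, P i j = 1) {w : X → E} (hw : ∀ i, ‖w i‖ ≤ ‖∑ j, P i j • w j‖) :
    ∃ c, w = Function.const X c := by
  cases isEmpty_or_nonempty X
  · exact ⟨0, Subsingleton.elim _ _⟩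
  obtain ⟨i, hi⟩ := Finite.exists_max fun j => ‖w j‖
  refine ⟨w i, funext fun j => ?_⟩
  by_contra hne
  exact (hw i).not_gt <| norm_sum_lt_of_strictConvexSpace (fun k _ => (hpos i k).le) (hrow i)
    (Finset.mem_univ j) (Finset.mem_univ i) hne (hpos i j).ne' (hpos i i).ne' fun k _ => hi k

theorem Matrix.map_ofReal_mulVec_const_eq_zero {D : Matrix X X ℝ} (hrow : ∀ i, ∑ j, D i j = 0)
    (c : ℂ) : D.map Complex.ofReal *ᵥ Function.const X c = 0 := by
  ext i
  simp [mulVec, dotProduct, ← Finset.sum_mul, ← Complex.ofReal_sum, hrow i]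

variable [DecidableEq X]

open scoped Matrix.Norms.Operator in
theorem Matrix.exp_mulVec_of_mulVec_eq_smul_s6 {𝕂 : Type*} [RCLike 𝕂] {A : Matrix X X 𝕂}
    {w : X → 𝕂} {μ : 𝕂} (h : A *ᵥ w = μ • w) : exp A *ᵥ w = exp μ • w := by
  have hpow (n : ℕ) : (A ^ n) *ᵥ w = μ ^ n • w := by
    induction n with
    | zero => simp
    | succ n ih => rw [pow_succ', ← mulVec_mulVec, ih, mulVec_smul, h, smul_smul, pow_succ]
  have hA := (exp_series_hasSum_exp' (𝕂 := 𝕂) A).map (mulVec.addMonoidHomLeft w)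
    (continuous_id.matrix_mulVec continuous_const)
  refine hA.unique (((exp_series_hasSum_exp' (𝕂 := 𝕂) μ).smul_const w).congr_fun fun n => ?_)
  simp [mulVec.addMonoidHomLeft, smul_mulVec, hpow, smul_smul]

open scoped Matrix.Norms.Operator in
theorem Matrix.exp_map_ofReal_s6 (D : Matrix X X ℝ) :
    exp (D.map Complex.ofReal) = (exp D).map Complex.ofReal :=
  (map_exp Complex.ofRealHom.mapMatrix (continuous_id.matrix_map Complex.continuous_ofReal) D).symm

theorem exists_eq_const_of_mulVec_eq_smul_of_re_nonneg {D : Matrix X X ℝ}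
    (hrow : ∀ i, ∑ j, D i j = 0) (hirr : ∀ i j, 0 < exp D i j) {w : X → ℂ} {lam : ℂ}
    (h : D.map Complex.ofReal *ᵥ w = lam • w) (hre : 0 ≤ lam.re) :
    ∃ c, w = Function.const X c := by
  have hstoch (i : X) : ∑ j, exp D i j = 1 := by
    have hones : D *ᵥ 1 = (0 : ℝ) • 1 := by ext i; simp [Matrix.mulVec, dotProduct, hrow i]
    simpa [Matrix.mulVec, dotProduct] using
      congrFun (Matrix.exp_mulVec_of_mulVec_eq_smul_s6 hones) i
  refine exists_eq_const_of_norm_le_norm_sum_smul hirr hstoch fun i => ?_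
  have hexp : ∑ j, exp D i j • w j = Complex.exp lam * w i := by
    simpa [Matrix.exp_map_ofReal_s6, Matrix.mulVec, dotProduct, Complex.real_smul,
      ← Complex.exp_eq_exp_ℂ] using congrFun (Matrix.exp_mulVec_of_mulVec_eq_smul_s6 h) i
  rw [hexp, norm_mul, Complex.norm_exp]
  exact le_mul_of_one_le_left (norm_nonneg _) (Real.one_le_exp hre)

end

theorem stmt_6_general {X : Type*} [Fintype X] [DecidableEq X]
    (D : Matrix X X ℝ)
    (hrow : ∀ i, ∑ j, D i j = 0)
    (hirr : ∀ i j, 0 < NormedSpace.exp D i j) :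
    (∀ w : X → ℂ, (D.map (Complex.ofReal)).mulVec w = 0 ↔ ∃ c : ℂ, w = Function.const X c) ∧
    (∀ (lam : ℂ) (w : X → ℂ), w ≠ 0 →
      (D.map (Complex.ofReal)).mulVec w = lam • w → lam ≠ 0 → lam.re < 0) := by
  refine ⟨fun w => ⟨fun hw => ?_, ?_⟩, fun lam w hw h hlam => ?_⟩
  · exact exists_eq_const_of_mulVec_eq_smul_of_re_nonneg hrow hirr (by rwa [zero_smul]) le_rfl
  · rintro ⟨c, rfl⟩
    exact Matrix.map_ofReal_mulVec_const_eq_zero hrow c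
  · by_contra! hre
    obtain ⟨c, rfl⟩ := exists_eq_const_of_mulVec_eq_smul_of_re_nonneg hrow hirr h hre
    have hzero := Matrix.map_ofReal_mulVec_const_eq_zero hrow c
    rw [h] at hzero
    exact hw ((smul_eq_zero.mp hzero).resolve_left hlam)

/-- For an irreducible generator matrix `D` (all entries of `exp D` positive), the complex
kernel of `D` consists exactly of the constant vectors, and every nonzero complex eigenvalue
has strictly negative real part. -/
theorem stmt_6 {X : Type*} [Fintype X] [DecidableEq X]
    (D : Matrix X X ℝ)
    (hoff : ∀ i j, i ≠ j → 0 ≤ D i j) (hrow : ∀ i, ∑ j, D i j = 0)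
    (hirr : ∀ i j, 0 < NormedSpace.exp D i j) :
    (∀ w : X → ℂ, (D.map (Complex.ofReal)).mulVec w = 0 ↔ ∃ c : ℂ, w = Function.const X c) ∧
    (∀ (lam : ℂ) (w : X → ℂ), w ≠ 0 →
      (D.map (Complex.ofReal)).mulVec w = lam • w → lam ≠ 0 → lam.re < 0) :=
  stmt_6_general D hrow hirr
end

section
/- Let D be a generator matrix on a finite set X such that every entry of exp(D) is strictly positive, let π be a probability vector invariant for D, let u : X → ℝ, set ȳ = Σ_i π(i)u(i) and ũ = u − ȳ·𝟏 where 𝟏 is the all-ones vector. Then the integral h(x) = ∫₀^∞ (exp(tD) ũ)(x) dt converges for every x ∈ X, and h solves Poisson's equation D h = −ũ. -/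
/-!
All entries of `P = exp D` are at least some `δ > 0`, so every row of `P` dominates `δ π`;
for `π ⬝ᵥ v = 0` this gives `‖P v‖∞ ≤ (1 - δ) ‖v‖∞` (Doeblin). Invariance of `π` keeps centred
vectors centred, and `exp (tD)` is a sup-norm contraction for `t ≥ 0`, so
`exp (tD) v = O(e^{-δ t})`. Hence `t ↦ exp (tD) ũ` is integrable on `(0, ∞)` and tends to `0`;
as `D ũ` is centred as well, `D h = ∫₀^∞ exp (tD) D ũ dt = ∫₀^∞ d/dt (exp (tD) ũ) dt = -ũ`.
-/

open MeasureTheory NormedSpace Filter Topology Set Matrix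

theorem integrableOn_Ioi_of_isBigO_exp_neg {E : Type*} [NormedAddCommGroup E] {f : ℝ → E}
    {a b : ℝ} (hb : 0 < b) (hf : ContinuousOn f (Ici a))
    (ho : f =O[atTop] fun t => Real.exp (-b * t)) : IntegrableOn f (Ioi a) :=
  ((hf.locallyIntegrableOn measurableSet_Ici).integrableOn_of_isBigO_atTop ho
    ⟨Ioi a, Ioi_mem_atTop a, exp_neg_integrableOn_Ioi a hb⟩).mono_set Ioi_subset_Ici_self

namespace Matrix

variable {X : Type*} [Fintype X]

theorem norm_mulVec_le_of_le {P : Matrix X X ℝ} {q : X → ℝ} (hq : ∀ i j, q j ≤ P i j)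
    (hP : P *ᵥ 1 = 1) {v : X → ℝ} (hv : q ⬝ᵥ v = 0) :
    ‖P *ᵥ v‖ ≤ (1 - ∑ j, q j) * ‖v‖ := by
  rcases isEmpty_or_nonempty X with hX | hX
  · simp [Subsingleton.elim (P *ᵥ v) 0]
  rw [pi_norm_le_iff_of_nonempty]
  intro i
  have hrow : ∑ j, P i j = 1 := by simpa [mulVec, dotProduct] using congrFun hP i
  -- subtracting `q ⬝ᵥ v = 0` leaves a combination of `v` with nonnegative weights
  calc ‖(P *ᵥ v) i‖ = |∑ j, (P i j - q j) * v j| := by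
        simp only [mulVec, dotProduct, Real.norm_eq_abs, sub_mul, Finset.sum_sub_distrib]
        rw [show ∑ j, q j * v j = 0 from hv, sub_zero]
    _ ≤ ∑ j, (P i j - q j) * ‖v‖ := by
        refine (Finset.abs_sum_le_sum_abs _ _).trans (Finset.sum_le_sum fun j _ => ?_)
        rw [abs_mul, abs_of_nonneg (sub_nonneg.2 (hq i j))]
        exact mul_le_mul_of_nonneg_left (norm_le_pi_norm v j) (sub_nonneg.2 (hq i j))
    _ = (1 - ∑ j, q j) * ‖v‖ := by rw [← Finset.sum_mul, Finset.sum_sub_distrib, hrow]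

variable [DecidableEq X]

theorem norm_pow_mulVec_le {P : Matrix X X ℝ} {π : X → ℝ} {r : ℝ} (hr : 0 ≤ r)
    (hπP : π ᵥ* P = π) (hP : ∀ v, π ⬝ᵥ v = 0 → ‖P *ᵥ v‖ ≤ r * ‖v‖) (n : ℕ) {v : X → ℝ}
    (hv : π ⬝ᵥ v = 0) : ‖P ^ n *ᵥ v‖ ≤ r ^ n * ‖v‖ := by
  induction n generalizing v with
  | zero => simp
  | succ n ih =>
    have hPv : π ⬝ᵥ (P *ᵥ v) = 0 := by rw [dotProduct_mulVec, hπP, hv]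
    rw [pow_succ, ← mulVec_mulVec, pow_succ, mul_assoc]
    exact (ih hPv).trans (mul_le_mul_of_nonneg_left (hP v hv) (pow_nonneg hr n))

section NormedExponential

attribute [local instance] Matrix.linftyOpNormedRing Matrix.linftyOpNormedAlgebra

theorem hasDerivAt_exp_smul_mulVec (A : Matrix X X ℝ) (v : X → ℝ) (t : ℝ) :
    HasDerivAt (fun s : ℝ => exp (s • A) *ᵥ v) (exp (t • A) *ᵥ (A *ᵥ v)) t := by
  let L : Matrix X X ℝ →L[ℝ] X → ℝ :=
    LinearMap.toContinuousLinearMap ((mulVecBilin ℝ ℝ).flip v)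
  rw [mulVec_mulVec]
  exact L.hasFDerivAt.comp_hasDerivAt t (hasDerivAt_exp_smul_const A t)

theorem exp_apply_nonneg {N : Matrix X X ℝ} (hN : ∀ i j, 0 ≤ N i j) (i j : X) :
    0 ≤ exp N i j := by
  have hpow (n : ℕ) : ∀ i j, 0 ≤ (N ^ n) i j := by
    induction n with
    | zero => intro i j; rw [pow_zero, one_apply]; split_ifs <;> simp
    | succ n ih =>
      intro i j
      rw [pow_succ, mul_apply]
      exact Finset.sum_nonneg fun k _ => mul_nonneg (ih i k) (hN k j)
  exact (Pi.hasSum.1 (Pi.hasSum.1 (exp_series_hasSum_exp' (𝕂 := ℝ) N) i) j).nonneg fun n =>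
    mul_nonneg (by positivity) (hpow n i j)

end NormedExponential

theorem continuous_exp_smul_mulVec (A : Matrix X X ℝ) (v : X → ℝ) :
    Continuous fun t : ℝ => exp (t • A) *ᵥ v :=
  continuous_iff_continuousAt.2 fun t => (hasDerivAt_exp_smul_mulVec A v t).continuousAt

theorem exp_mulVec_eq_self {A : Matrix X X ℝ} {v : X → ℝ} (hv : A *ᵥ v = 0) :
    exp A *ᵥ v = v := by
  have hderiv (t : ℝ) := hasDerivAt_exp_smul_mulVec A v t
  simpa using is_const_of_deriv_eq_zero (fun t => (hderiv t).differentiableAt)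
    (fun t => by rw [(hderiv t).deriv, hv, mulVec_zero]) 1 0

theorem vecMul_exp_eq_self {A : Matrix X X ℝ} {w : X → ℝ} (hw : w ᵥ* A = 0) :
    w ᵥ* exp A = w := by
  rw [← mulVec_transpose, ← exp_transpose]
  exact exp_mulVec_eq_self (by rwa [mulVec_transpose])

theorem exp_smul_apply_nonneg {A : Matrix X X ℝ} (hA : ∀ i j, i ≠ j → 0 ≤ A i j) {t : ℝ}
    (ht : 0 ≤ t) (i j : X) : 0 ≤ exp (t • A) i j := by
  obtain ⟨c, hc⟩ : ∃ c : ℝ, ∀ k, 0 ≤ A k k + c := ⟨∑ k, |A k k|, fun k => by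
    linarith [neg_abs_le (A k k),
      Finset.single_le_sum (fun k _ => abs_nonneg (A k k)) (Finset.mem_univ k)]⟩
  set N := t • A + (t * c) • (1 : Matrix X X ℝ) with hNdef
  have hN : ∀ i j, 0 ≤ N i j := by
    intro i j
    rcases eq_or_ne i j with rfl | hij
    · simpa [hNdef, mul_add] using mul_nonneg ht (hc i)
    · simpa [hNdef, hij] using mul_nonneg ht (hA i j hij)
  have hsplit : t • A = N + diagonal fun _ => -(t * c) := by
    rw [← smul_one_eq_diagonal, hNdef]; module
  have hcomm : Commute N (diagonal fun _ => -(t * c)) := by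
    rw [← smul_one_eq_diagonal]; exact (Commute.one_right _).smul_right _
  rw [hsplit, exp_add_of_commute _ _ hcomm, exp_diagonal, mul_diagonal, Pi.exp_def,
    ← Real.exp_eq_exp_ℝ]
  exact mul_nonneg (exp_apply_nonneg hN i j) (Real.exp_nonneg _)

theorem exp_smul_mulVec_one {D : Matrix X X ℝ} (hD : D *ᵥ 1 = 0) (t : ℝ) :
    exp (t • D) *ᵥ 1 = 1 :=
  exp_mulVec_eq_self (by rw [smul_mulVec, hD, smul_zero])

theorem norm_exp_smul_mulVec_le {D : Matrix X X ℝ} (hoff : ∀ i j, i ≠ j → 0 ≤ D i j)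
    (hD : D *ᵥ 1 = 0) {t : ℝ} (ht : 0 ≤ t) (v : X → ℝ) : ‖exp (t • D) *ᵥ v‖ ≤ ‖v‖ := by
  simpa using norm_mulVec_le_of_le (q := 0) (exp_smul_apply_nonneg hoff ht)
    (exp_smul_mulVec_one hD t) (zero_dotProduct v)

theorem exists_norm_exp_mulVec_le {D : Matrix X X ℝ} (hD : D *ᵥ 1 = 0)
    (hpos : ∀ i j, 0 < exp D i j) {π : X → ℝ} (hπ0 : ∀ i, 0 ≤ π i) (hπ1 : ∑ i, π i = 1) :
    ∃ δ > 0, ∀ v, π ⬝ᵥ v = 0 → ‖exp D *ᵥ v‖ ≤ Real.exp (-δ) * ‖v‖ := by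
  have hsmall : ∀ᶠ δ in 𝓝[>] (0 : ℝ), (∀ i j, δ ≤ exp D i j) ∧ 0 < δ :=
    (eventually_all.2 fun i => eventually_all.2 fun j =>
      (eventually_le_nhds (hpos i j)).filter_mono nhdsWithin_le_nhds).and self_mem_nhdsWithin
  obtain ⟨δ, hδP, hδ⟩ := hsmall.exists
  refine ⟨δ, hδ, fun v hv => ?_⟩
  have hq (i j : X) : (δ • π) j ≤ exp D i j := by
    have hπj : π j ≤ 1 := hπ1 ▸ Finset.single_le_sum (fun i _ => hπ0 i) (Finset.mem_univ j)
    calc (δ • π) j = δ * π j := rfl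
      _ ≤ δ := mul_le_of_le_one_right hδ.le hπj
      _ ≤ exp D i j := hδP i j
  calc ‖exp D *ᵥ v‖ ≤ (1 - ∑ j, (δ • π) j) * ‖v‖ :=
        norm_mulVec_le_of_le hq (by simpa using exp_smul_mulVec_one hD 1)
          (by rw [smul_dotProduct, hv, smul_zero])
    _ = (1 - δ) * ‖v‖ := by simp [← Finset.mul_sum, hπ1]
    _ ≤ Real.exp (-δ) * ‖v‖ := by gcongr; exact Real.one_sub_le_exp_neg δ

theorem isBigO_exp_smul_mulVec {D : Matrix X X ℝ} (hoff : ∀ i j, i ≠ j → 0 ≤ D i j)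
    (hD : D *ᵥ 1 = 0) (hpos : ∀ i j, 0 < exp D i j) {π : X → ℝ} (hπ0 : ∀ i, 0 ≤ π i)
    (hπ1 : ∑ i, π i = 1) (hπD : π ᵥ* D = 0) :
    ∃ δ > 0, ∀ v, π ⬝ᵥ v = 0 →
      (fun t : ℝ => exp (t • D) *ᵥ v) =O[atTop] fun t => Real.exp (-δ * t) := by
  obtain ⟨δ, hδ, hstep⟩ := exists_norm_exp_mulVec_le hD hpos hπ0 hπ1
  refine ⟨δ, hδ, fun v hv => Asymptotics.IsBigO.of_bound (Real.exp δ * ‖v‖) ?_⟩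
  filter_upwards [eventually_ge_atTop 0] with t ht
  set n := ⌊t⌋₊
  have hsplit : exp (t • D) = exp ((t - n) • D) * exp D ^ n := by
    rw [← exp_nsmul, ← exp_add_of_commute _ _ (((Commute.refl D).smul_left _).smul_right _),
      ← Nat.cast_smul_eq_nsmul ℝ, ← add_smul, sub_add_cancel]
  calc ‖exp (t • D) *ᵥ v‖ = ‖exp ((t - n) • D) *ᵥ (exp D ^ n *ᵥ v)‖ := by
        rw [hsplit, mulVec_mulVec]
    _ ≤ ‖exp D ^ n *ᵥ v‖ := norm_exp_smul_mulVec_le hoff hD (sub_nonneg.2 (Nat.floor_le ht)) _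
    _ ≤ Real.exp (-δ) ^ n * ‖v‖ :=
        norm_pow_mulVec_le (Real.exp_nonneg _) (vecMul_exp_eq_self hπD) hstep n hv
    _ ≤ Real.exp δ * ‖v‖ * ‖Real.exp (-δ * t)‖ := by
        rw [← Real.exp_nat_mul, Real.norm_of_nonneg (Real.exp_nonneg _), mul_right_comm,
          ← Real.exp_add]
        gcongr
        nlinarith [Nat.lt_floor_add_one t]

theorem mulVec_integral_exp_smul_mulVec {A : Matrix X X ℝ} {v : X → ℝ}
    (hv : IntegrableOn (fun t : ℝ => exp (t • A) *ᵥ v) (Ioi 0))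
    (hAv : IntegrableOn (fun t : ℝ => exp (t • A) *ᵥ (A *ᵥ v)) (Ioi 0))
    (hlim : Tendsto (fun t : ℝ => exp (t • A) *ᵥ v) atTop (𝓝 0)) :
    A *ᵥ ∫ t in Ioi (0 : ℝ), exp (t • A) *ᵥ v = -v := by
  let L : (X → ℝ) →L[ℝ] X → ℝ := LinearMap.toContinuousLinearMap A.mulVecLin
  have hcomm (t : ℝ) : A *ᵥ (exp (t • A) *ᵥ v) = exp (t • A) *ᵥ (A *ᵥ v) := by
    rw [mulVec_mulVec, mulVec_mulVec, ((Commute.refl A).smul_right t).exp_right.eq]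
  calc A *ᵥ ∫ t in Ioi (0 : ℝ), exp (t • A) *ᵥ v
        = ∫ t in Ioi (0 : ℝ), A *ᵥ (exp (t • A) *ᵥ v) := (L.integral_comp_comm hv).symm
    _ = ∫ t in Ioi (0 : ℝ), exp (t • A) *ᵥ (A *ᵥ v) := by simp_rw [hcomm]
    _ = 0 - exp ((0 : ℝ) • A) *ᵥ v := integral_Ioi_of_hasDerivAt_of_tendsto'
        (fun t _ => hasDerivAt_exp_smul_mulVec A v t) hAv hlim
    _ = -v := by simp

end Matrix

/-- For an irreducible generator matrix with invariant probability vector `π`, the integral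
`h(x) = ∫₀^∞ (exp(tD)ũ)(x) dt` of the centered utility `ũ = u − ȳ𝟏` converges and solves
Poisson's equation `Dh = −ũ`. -/
theorem stmt_7 {X : Type*} [Fintype X] [DecidableEq X]
    (D : Matrix X X ℝ)
    (hoff : ∀ i j, i ≠ j → 0 ≤ D i j) (hrow : ∀ i, ∑ j, D i j = 0)
    (hirr : ∀ i j, 0 < NormedSpace.exp D i j)
    (π : X → ℝ) (hπnn : ∀ i, 0 ≤ π i) (hπsum : ∑ i, π i = 1)
    (hπinv : ∀ j, ∑ i, π i * D i j = 0)
    (u : X → ℝ) (ybar : ℝ) (hybar : ybar = ∑ i, π i * u i)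
    (util : X → ℝ) (hutil : ∀ i, util i = u i - ybar)
    (h : X → ℝ)
    (hh : ∀ x, h x = ∫ t in Set.Ioi (0 : ℝ), (NormedSpace.exp (t • D)).mulVec util x) :
    (∀ x, MeasureTheory.IntegrableOn
        (fun t : ℝ => (NormedSpace.exp (t • D)).mulVec util x) (Set.Ioi 0)) ∧
    D.mulVec h = -util := by
  have hD1 : D *ᵥ 1 = 0 := funext fun i => by simpa [mulVec, dotProduct] using hrow i
  have hπD : π ᵥ* D = 0 := funext fun j => by simpa [vecMul, dotProduct] using hπinv j
  have hcent : π ⬝ᵥ util = 0 := by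
    simp only [dotProduct, hutil, mul_sub, Finset.sum_sub_distrib, ← Finset.sum_mul, hπsum, hybar]
    ring
  have hcentD : π ⬝ᵥ (D *ᵥ util) = 0 := by rw [dotProduct_mulVec, hπD, zero_dotProduct]
  obtain ⟨δ, hδ, hdecay⟩ := isBigO_exp_smul_mulVec hoff hD1 hirr hπnn hπsum hπD
  have hint {v : X → ℝ} (hv : π ⬝ᵥ v = 0) :
      IntegrableOn (fun t : ℝ => exp (t • D) *ᵥ v) (Ioi 0) :=
    integrableOn_Ioi_of_isBigO_exp_neg hδ (continuous_exp_smul_mulVec D v).continuousOn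
      (hdecay v hv)
  have hlim : Tendsto (fun t : ℝ => exp (t • D) *ᵥ util) atTop (𝓝 0) :=
    (hdecay util hcent).trans_tendsto <|
      Real.tendsto_exp_atBot.comp (tendsto_id.const_mul_atTop_of_neg (neg_neg_of_pos hδ))
  have hH : h = ∫ t in Ioi (0 : ℝ), exp (t • D) *ᵥ util :=
    funext fun x => by rw [hh x, eval_integral (hint hcent).eval]
  exact ⟨(hint hcent).eval, hH ▸ mulVec_integral_exp_smul_mulVec (hint hcent) (hint hcentD) hlim⟩
end

section
/- Let D be a generator matrix on a finite set X satisfying detailed balance with respect to a strictly positive probability vector π, let u : X → ℝ, ȳ = Σ_i π(i)u(i), ũ = u − ȳ·𝟏, and let h : X → ℝ solve D h = −ũ. Define D′_0(i,j) = −h(i) D(i,j) + D(i,j) h(j) + ũ(i)·𝟙{i=j} and B_j = Σ_i π(i) D′_0(i,j). Then B_j = 2 π(j) ũ(j) for every j ∈ X. -/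
/-!
Detailed balance lets a `π`-weighted column sum be computed as a row sum:
`∑ᵢ π i h i D i j = π j (D h) j = -π j ũ j` and `∑ᵢ π i D i j = π j ∑ᵢ D j i = 0`.
So the two `h`-terms of `D′₀` contribute `π j ũ j`, and the diagonal term another `π j ũ j`.
-/

namespace Matrix

variable {X R : Type*} [Fintype X] [CommSemiring R] {D : Matrix X X R} {π : X → R}

theorem vecMul_mul_eq_mul_mulVec_of_detailed_balance
    (hrev : ∀ i j, π i * D i j = π j * D j i) (v : X → R) :
    (π * v) ᵥ* D = π * (D *ᵥ v) := by
  ext j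
  simp only [vecMul, mulVec, dotProduct, Pi.mul_apply, Finset.mul_sum]
  refine Finset.sum_congr rfl fun i _ => ?_
  rw [mul_right_comm, hrev, mul_assoc]

theorem vecMul_eq_zero_of_detailed_balance
    (hrev : ∀ i j, π i * D i j = π j * D j i) (hrow : ∀ i, ∑ j, D i j = 0) :
    π ᵥ* D = 0 := by
  have hD1 : D *ᵥ 1 = 0 := funext fun i => by simp [mulVec, dotProduct, hrow i]
  simpa [hD1] using vecMul_mul_eq_mul_mulVec_of_detailed_balance hrev 1

end Matrix

theorem stmt_11_general {X : Type*} [Fintype X] [DecidableEq X]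
    (D : Matrix X X ℝ)
    (hrow : ∀ i, ∑ j, D i j = 0)
    (π : X → ℝ)
    (hrev : ∀ i j, π i * D i j = π j * D j i)
    (util : X → ℝ)
    (h : X → ℝ) (hPoisson : D.mulVec h = -util)
    (D'0 : Matrix X X ℝ)
    (hD'0 : ∀ i j, D'0 i j = -(h i) * D i j + D i j * h j + util i * (if i = j then 1 else 0))
    (B : X → ℝ) (hB : ∀ j, B j = ∑ i, π i * D'0 i j) :
    ∀ j, B j = 2 * π j * util j := by
  intro j
  have hflux : ∑ i, π i * h i * D i j = -(π j * util j) := by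
    simpa [Matrix.vecMul, dotProduct, hPoisson] using
      congrFun (Matrix.vecMul_mul_eq_mul_mulVec_of_detailed_balance hrev h) j
  have hinv : ∑ i, π i * D i j = 0 := by
    simpa [Matrix.vecMul, dotProduct] using
      congrFun (Matrix.vecMul_eq_zero_of_detailed_balance hrev hrow) j
  have hsplit : ∀ i, π i * D'0 i j =
      -(π i * h i * D i j) + π i * D i j * h j + π i * (util i * if i = j then 1 else 0) := by
    intro i; rw [hD'0]; ring
  simp only [hB, hsplit, Finset.sum_add_distrib, Finset.sum_neg_distrib, ← Finset.sum_mul,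
    hflux, hinv, mul_ite, mul_one, mul_zero, Finset.sum_ite_eq', Finset.mem_univ, if_true]
  ring

/-- Reversible case of the formula for the input vector of the linearized mean-field model:
if the generator `D` satisfies detailed balance w.r.t. `π`, then
`B_j = Σ_i π(i)D′₀(i,j) = 2π(j)ũ(j)`. -/
theorem stmt_11 {X : Type*} [Fintype X] [DecidableEq X]
    (D : Matrix X X ℝ)
    (hoff : ∀ i j, i ≠ j → 0 ≤ D i j) (hrow : ∀ i, ∑ j, D i j = 0)
    (π : X → ℝ) (hπpos : ∀ i, 0 < π i) (hπsum : ∑ i, π i = 1)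
    (hrev : ∀ i j, π i * D i j = π j * D j i)
    (u : X → ℝ) (ybar : ℝ) (hybar : ybar = ∑ i, π i * u i)
    (util : X → ℝ) (hutil : ∀ i, util i = u i - ybar)
    (h : X → ℝ) (hPoisson : D.mulVec h = -util)
    (D'0 : Matrix X X ℝ)
    (hD'0 : ∀ i j, D'0 i j = -(h i) * D i j + D i j * h j + util i * (if i = j then 1 else 0))
    (B : X → ℝ) (hB : ∀ j, B j = ∑ i, π i * D'0 i j) :
    ∀ j, B j = 2 * π j * util j :=
  stmt_11_general D hrow π hrev util h hPoisson D'0 hD'0 B hB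
end

section
/- Let X be a finite set, let t ↦ D_t be a continuous map from [0,∞) to real matrices on X such that D_t is a generator matrix for every t, and let μ : [0,∞) → ℝ^X be differentiable with d/dt μ_t(j) = Σ_i μ_t(i) D_t(i,j) for all j and t ≥ 0. If μ_0 is a probability vector (nonnegative entries summing to 1), then μ_t is a probability vector for every t ≥ 0. -/
/-!
Summing the equation over `j` and using that rows of `D_t` sum to zero shows that the total
mass is constant. For positivity, bound the column sums of `D_s` on `[0, t]` by some `L`. For
every `ε > 0` the function `μ_s + ε e^{L s}` stays positive: at a first time where a coordinate
`j` reaches `0`, that coordinate is the minimal one, so off-diagonal nonnegativity gives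
`(μ_s D_s)_j ≥ μ_s(j) Σ_i D_s(i, j) > -ε e^{L s} L`, i.e. a positive derivative, which is
impossible for a first zero. Letting `ε → 0` gives `μ_t ≥ 0`.
-/

open Set Finset Filter Topology Matrix

theorem HasDerivWithinAt.nonpos_of_le_on_Ico {f : ℝ → ℝ} {f' a x : ℝ}
    (hf : HasDerivWithinAt f f' (Ico a x) x) (hax : a < x) (hle : ∀ y ∈ Ico a x, f x ≤ f y) :
    f' ≤ 0 := by
  have hslope : Tendsto (slope f x) (𝓝[<] x) (𝓝 f') := by
    simpa [← nhdsWithin_Ico_eq_nhdsLT hax] using hasDerivWithinAt_iff_tendsto_slope.1 hf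
  refine le_of_tendsto hslope ?_
  rw [← nhdsWithin_Ico_eq_nhdsLT hax]
  filter_upwards [self_mem_nhdsWithin] with y hy
  rw [slope_def_field]
  exact div_nonpos_of_nonneg_of_nonpos (sub_nonneg.2 (hle y hy)) (sub_nonpos.2 hy.2.le)

theorem forall_pos_of_hasDerivWithinAt_pos_of_eq_zero {X : Type*} [Finite X]
    {g g' : X → ℝ → ℝ} {a b : ℝ}
    (hderiv : ∀ j, ∀ s ∈ Icc a b, HasDerivWithinAt (g j) (g' j s) (Ici a) s)
    (hzero : ∀ s ∈ Ioc a b, (∀ i, 0 ≤ g i s) → ∀ j, g j s = 0 → 0 < g' j s)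
    (ha : ∀ j, 0 < g j a) : ∀ s ∈ Icc a b, ∀ j, 0 < g j s := by
  by_contra! hbad
  have hcont : ∀ j, ContinuousOn (g j) (Icc a b) := fun j s hs =>
    (hderiv j s hs).continuousWithinAt.mono Icc_subset_Ici_self
  set B := ⋃ j, Icc a b ∩ g j ⁻¹' Iic 0
  have hB : IsCompact B := isCompact_Icc.of_isClosed_subset
    (isClosed_iUnion_of_finite fun j => (hcont j).preimage_isClosed_of_isClosed isClosed_Icc
      isClosed_Iic)
    (iUnion_subset fun j => inter_subset_left)
  obtain ⟨t₀, ht₀, hleast⟩ := hB.exists_isLeast (by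
    obtain ⟨s, hs, j, hj⟩ := hbad
    exact ⟨s, mem_iUnion.2 ⟨j, hs, hj⟩⟩)
  obtain ⟨j, ht₀ab, hj⟩ := mem_iUnion.1 ht₀
  have hat₀ : a < t₀ := ht₀ab.1.lt_of_ne fun h => (ha j).not_ge (h ▸ hj)
  have hsub : Ico a t₀ ⊆ Icc a b := fun s hs => ⟨hs.1, hs.2.le.trans ht₀ab.2⟩
  have hbefore : ∀ s ∈ Ico a t₀, ∀ i, 0 < g i s := fun s hs i => by
    by_contra! hi
    exact hs.2.not_ge (hleast (mem_iUnion.2 ⟨i, hsub hs, hi⟩))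
  have hat : ∀ i, 0 ≤ g i t₀ := fun i => by
    have hmem : t₀ ∈ closure (Ico a t₀) := by
      rw [closure_Ico hat₀.ne]; exact right_mem_Icc.2 hat₀.le
    exact ContinuousWithinAt.closure_le hmem continuousWithinAt_const
      ((hcont i t₀ ht₀ab).mono hsub) fun s hs => (hbefore s hs i).le
  have hj0 : g j t₀ = 0 := le_antisymm hj (hat j)
  have hderiv_nonpos : g' j t₀ ≤ 0 :=
    ((hderiv j t₀ ht₀ab).mono Ico_subset_Ici_self).nonpos_of_le_on_Ico hat₀
      fun s hs => hj0 ▸ (hbefore s hs j).le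
  exact hderiv_nonpos.not_gt (hzero t₀ ⟨hat₀, ht₀ab.2⟩ hat j hj0)

theorem mul_sum_le_vecMul_apply_of_forall_le {X : Type*} [Fintype X] {D : Matrix X X ℝ}
    {ν : X → ℝ} {j : X} (hD : ∀ i k, i ≠ k → 0 ≤ D i k) (hmin : ∀ i, ν j ≤ ν i) :
    ν j * ∑ i, D i j ≤ (ν ᵥ* D) j := by
  have hterm : ∀ i, 0 ≤ (ν i - ν j) * D i j := fun i => by
    rcases eq_or_ne i j with rfl | hij
    · simp
    · exact mul_nonneg (sub_nonneg.2 (hmin i)) (hD i j hij)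
  have hdiff : (ν ᵥ* D) j - ν j * ∑ i, D i j = ∑ i, (ν i - ν j) * D i j := by
    simp only [vecMul, dotProduct, Finset.mul_sum, ← Finset.sum_sub_distrib, sub_mul]
  linarith [Finset.sum_nonneg fun i (_ : i ∈ Finset.univ) => hterm i]

theorem sum_vecMul_eq_zero {X : Type*} [Fintype X] {D : Matrix X X ℝ} (ν : X → ℝ)
    (hrow : ∀ i, ∑ j, D i j = 0) : ∑ j, (ν ᵥ* D) j = 0 := by
  simp only [vecMul, dotProduct]
  rw [Finset.sum_comm]
  simp [← Finset.mul_sum, hrow]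

section VecMulODE

variable {X : Type*} [Fintype X] {D : ℝ → Matrix X X ℝ} {μ : ℝ → X → ℝ} {a : ℝ}

theorem sum_eq_of_hasDerivWithinAt_vecMul (hrow : ∀ s ∈ Ici a, ∀ i, ∑ j, D s i j = 0)
    (hode : ∀ s ∈ Ici a, HasDerivWithinAt μ (μ s ᵥ* D s) (Ici a) s) :
    ∀ t ∈ Ici a, ∑ j, μ t j = ∑ j, μ a j := by
  have hsum : ∀ s ∈ Ici a, HasDerivWithinAt (fun u => ∑ j, μ u j) 0 (Ici a) s := fun s hs => by
    have := HasDerivWithinAt.fun_sum (u := Finset.univ) fun j _ =>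
      hasDerivWithinAt_pi.1 (hode s hs) j
    rwa [sum_vecMul_eq_zero _ (hrow s hs)] at this
  intro t ht
  refine constant_of_has_deriv_right_zero (f := fun u => ∑ j, μ u j) (fun s hs => ?_)
    (fun s hs => ?_) t (right_mem_Icc.2 ht)
  · exact (hsum s hs.1).continuousWithinAt.mono Icc_subset_Ici_self
  · exact (hsum s hs.1).mono (Ici_subset_Ici.2 hs.1)

theorem nonneg_of_hasDerivWithinAt_vecMul {b L : ℝ}
    (hoff : ∀ s ∈ Icc a b, ∀ i j, i ≠ j → 0 ≤ D s i j)
    (hcol : ∀ s ∈ Icc a b, ∀ j, ∑ i, D s i j < L)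
    (hode : ∀ s ∈ Icc a b, HasDerivWithinAt μ (μ s ᵥ* D s) (Ici a) s)
    (ha : ∀ j, 0 ≤ μ a j) : ∀ t ∈ Icc a b, ∀ j, 0 ≤ μ t j := by
  have hbarrier : ∀ ε > 0, ∀ t ∈ Icc a b, ∀ j, 0 < μ t j + ε * Real.exp (L * t) := by
    intro ε hε
    refine forall_pos_of_hasDerivWithinAt_pos_of_eq_zero
      (g := fun j s => μ s j + ε * Real.exp (L * s))
      (g' := fun j s => (μ s ᵥ* D s) j + ε * Real.exp (L * s) * L)
      (fun j s hs => ?_) (fun s hs hnn j hj => ?_) (fun j => by have := ha j; positivity)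
    · have hexp : HasDerivAt (fun u => ε * Real.exp (L * u)) (ε * Real.exp (L * s) * L) s := by
        simpa [mul_assoc] using ((hasDerivAt_id s).const_mul L).exp.const_mul ε
      exact (hasDerivWithinAt_pi.1 (hode s hs) j).add hexp.hasDerivWithinAt
    · have hs' := Ioc_subset_Icc_self hs
      set c := ε * Real.exp (L * s)
      have hc : 0 < c := by positivity
      have hμj : μ s j = -c := by linarith
      have hmin : ∀ i, μ s j ≤ μ s i := fun i => by linarith [hnn i]
      have hdrift : -c * ∑ i, D s i j ≤ (μ s ᵥ* D s) j :=
        hμj ▸ mul_sum_le_vecMul_apply_of_forall_le (hoff s hs') hmin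
      linarith [mul_lt_mul_of_pos_left (hcol s hs' j) hc]
  intro t ht j
  refine le_of_forall_pos_lt_add fun δ hδ => ?_
  have hE : 0 < Real.exp (L * t) := Real.exp_pos _
  simpa [div_mul_cancel₀ δ hE.ne'] using hbarrier (δ / Real.exp (L * t)) (by positivity) t ht j

end VecMulODE

theorem exists_sum_col_lt_of_continuousOn {X : Type*} [Fintype X] {D : ℝ → Matrix X X ℝ}
    {K : Set ℝ} (hK : IsCompact K) (hD : ContinuousOn D K) :
    ∃ L, ∀ s ∈ K, ∀ j, ∑ i, D s i j < L := by
  have hcolsum : ContinuousOn (fun s j => ∑ i, D s i j) K :=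
    continuousOn_pi.2 fun j => continuousOn_finsetSum _ fun i _ =>
      (continuous_id.matrix_elem i j).comp_continuousOn hD
  obtain ⟨C, hC⟩ := hK.exists_bound_of_continuousOn hcolsum
  refine ⟨C + 1, fun s hs j => ?_⟩
  calc ∑ i, D s i j ≤ ‖fun j => ∑ i, D s i j‖ :=
        (le_abs_self _).trans (norm_le_pi_norm (fun j => ∑ i, D s i j) j)
    _ < C + 1 := by linarith [hC s hs]

theorem stmt_18_general {X : Type*} [Fintype X]
    (Dm : ℝ → Matrix X X ℝ)
    (hcont : ContinuousOn Dm (Set.Ici (0 : ℝ)))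
    (hgen : ∀ t ∈ Set.Ici (0 : ℝ),
      (∀ i j, i ≠ j → 0 ≤ Dm t i j) ∧ (∀ i, ∑ j, Dm t i j = 0))
    (μ : ℝ → X → ℝ)
    (hode : ∀ t ∈ Set.Ici (0 : ℝ),
      HasDerivWithinAt μ (fun j => ∑ i, μ t i * Dm t i j) (Set.Ici 0) t)
    (hμ0nn : ∀ j, 0 ≤ μ 0 j) (hμ0sum : ∑ j, μ 0 j = 1) :
    ∀ t ∈ Set.Ici (0 : ℝ), (∀ j, 0 ≤ μ t j) ∧ ∑ j, μ t j = 1 := by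
  intro t ht
  obtain ⟨L, hL⟩ := exists_sum_col_lt_of_continuousOn (isCompact_Icc (a := 0) (b := t))
    (hcont.mono Icc_subset_Ici_self)
  refine ⟨nonneg_of_hasDerivWithinAt_vecMul (fun s hs => (hgen s hs.1).1) hL
    (fun s hs => hode s hs.1) hμ0nn t ⟨ht, le_rfl⟩, ?_⟩
  rw [← hμ0sum]
  exact sum_eq_of_hasDerivWithinAt_vecMul (fun s hs => (hgen s hs).2) hode t ht

/-- Solutions of the mean-field state equation `d/dt μ_t = μ_t D_t`, for a continuous family
of generator matrices `D_t`, remain probability vectors for all `t ≥ 0` if `μ₀` is one. -/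
theorem stmt_18 {X : Type*} [Fintype X] [DecidableEq X]
    (Dm : ℝ → Matrix X X ℝ)
    (hcont : ContinuousOn Dm (Set.Ici (0 : ℝ)))
    (hgen : ∀ t ∈ Set.Ici (0 : ℝ),
      (∀ i j, i ≠ j → 0 ≤ Dm t i j) ∧ (∀ i, ∑ j, Dm t i j = 0))
    (μ : ℝ → X → ℝ)
    (hode : ∀ t ∈ Set.Ici (0 : ℝ),
      HasDerivWithinAt μ (fun j => ∑ i, μ t i * Dm t i j) (Set.Ici 0) t)
    (hμ0nn : ∀ j, 0 ≤ μ 0 j) (hμ0sum : ∑ j, μ 0 j = 1) :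
    ∀ t ∈ Set.Ici (0 : ℝ), (∀ j, 0 ≤ μ t j) ∧ ∑ j, μ t j = 1 :=
  stmt_18_general Dm hcont hgen μ hode hμ0nn hμ0sum
end
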